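/- arXiv:1512.03898 — 3 statements merged into one kernel-verified Lean document; each statement's English description precedes it below -/
import Mathlib

section
/- Let q ∈ ℂ[X] have zero constant term, D the derivative on ℂ[X], and P_n = e^{q(D)}(X^n). Then P_n is an eigenfunction of the differential operator L₁ = M∘D + q'(D)∘D with eigenvalue n: L₁(P_n) = n • P_n. -/
open Polynomial

/-- Multiplication by `X` as a linear endomorphism of `ℂ[X]`. -/
noncomputable def Mop : Module.End ℂ ℂ[X] := LinearMap.mulLeft ℂ (X : ℂ[X])

/-- The derivative as a linear endomorphism of `ℂ[X]`. -/
noncomputable def Dop : Module.End ℂ ℂ[X] := Polynomial.derivative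

/-- `H = M ∘ D`, i.e. `x·d/dx`. -/
noncomputable def Hop : Module.End ℂ ℂ[X] := Mop * Dop

/-- `B = M ∘ D ∘ D + β • D`, i.e. `B(p) = X·p'' + β·p'`. -/
noncomputable def Bop (β : ℂ) : Module.End ℂ ℂ[X] := Mop * Dop * Dop + β • Dop

/-- The locally finite exponential `e^A p = ∑ₘ Aᵐ p / m!` of a degree-lowering
operator `A` (the series terminates, so it may be truncated at `deg p`). -/
noncomputable def expOp (A : Module.End ℂ ℂ[X]) (p : ℂ[X]) : ℂ[X] :=
  ∑ m ∈ Finset.range (p.natDegree + 1), ((Nat.factorial m : ℂ))⁻¹ • (A ^ m) p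

lemma comm1 : Dop * Mop = Mop * Dop + 1 := by
  apply LinearMap.ext; intro p
  simp only [Dop, Mop, Module.End.mul_apply, LinearMap.mulLeft_apply, LinearMap.add_apply,
    Module.End.one_apply, derivative_mul, derivative_X, one_mul]
  ring

lemma comm_pow (k : ℕ) : Dop ^ (k+1) * Mop = Mop * Dop ^ (k+1) + ((k+1 : ℕ) : ℂ) • Dop ^ k := by
  induction k with
  | zero => simpa using comm1
  | succ k ih =>
    have h : Dop ^ (k+1+1) * Mop = Dop * (Dop ^ (k+1) * Mop) := by
      rw [pow_succ', mul_assoc]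
    rw [h, ih, mul_add, ← mul_assoc, comm1, mul_smul_comm, ← pow_succ', add_mul, one_mul,
      mul_assoc, ← pow_succ']
    push_cast
    module

lemma comm_q (q : ℂ[X]) :
    aeval Dop q * Mop = Mop * aeval Dop q + aeval Dop (derivative q) := by
  induction q using Polynomial.induction_on' with
  | add a b ha hb =>
    simp only [map_add, add_mul, mul_add, ha, hb]
    abel
  | monomial k a =>
    cases k with
    | zero =>
      simp [aeval_monomial, Algebra.smul_def, Algebra.commutes]
    | succ k =>
      simp only [aeval_monomial, derivative_monomial, Nat.add_sub_cancel, ← Algebra.smul_def]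
      rw [smul_mul_assoc, comm_pow, smul_add, mul_smul_comm, smul_smul]


lemma aeval_commute (r s : ℂ[X]) : aeval Dop r * aeval Dop s = aeval Dop s * aeval Dop r := by
  rw [← map_mul, ← map_mul, mul_comm]

lemma Dop_comm (r : ℂ[X]) : aeval Dop r * Dop = Dop * aeval Dop r := by
  have := aeval_commute r X
  simpa using this

lemma C_comm (q : ℂ[X]) :
    aeval Dop q * (aeval Dop (derivative q) * Dop) = (aeval Dop (derivative q) * Dop) * aeval Dop q := by
  rw [← mul_assoc, aeval_commute, mul_assoc, Dop_comm q, ← mul_assoc]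

lemma comm_H (q : ℂ[X]) :
    aeval Dop q * (Mop * Dop) = (Mop * Dop) * aeval Dop q + aeval Dop (derivative q) * Dop := by
  rw [← mul_assoc, comm_q, add_mul, mul_assoc, Dop_comm q, ← mul_assoc]

lemma comm_H_pow (q : ℂ[X]) (m : ℕ) :
    aeval Dop q ^ (m+1) * (Mop * Dop)
      = (Mop * Dop) * aeval Dop q ^ (m+1)
        + ((m+1 : ℕ) : ℂ) • (aeval Dop (derivative q) * Dop * aeval Dop q ^ m) := by
  induction m with
  | zero => simpa using comm_H q
  | succ m ih =>
    have h : aeval Dop q ^ (m+1+1) * (Mop * Dop) = aeval Dop q * (aeval Dop q ^ (m+1) * (Mop * Dop)) := by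
      rw [pow_succ', mul_assoc]
    rw [h, ih, mul_add, ← mul_assoc, comm_H, mul_smul_comm, ← mul_assoc, C_comm,
      mul_assoc _ _ (aeval Dop q ^ m), ← pow_succ', add_mul, mul_assoc, ← pow_succ']
    push_cast
    module

lemma deg_aeval (r p : ℂ[X]) : ((aeval Dop r) p).natDegree ≤ p.natDegree := by
  induction r using Polynomial.induction_on' with
  | add a b ha hb =>
    rw [map_add, LinearMap.add_apply]
    exact (natDegree_add_le _ _).trans (max_le ha hb)
  | monomial k a =>
    rw [aeval_monomial, Algebra.algebraMap_eq_smul_one, smul_mul_assoc, one_mul,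
      LinearMap.smul_apply]
    refine (natDegree_smul_le _ _).trans ?_
    have h1 : (Dop ^ k) p = Polynomial.derivative^[k] p := by
      rw [Module.End.pow_apply]; rfl
    rw [h1]
    exact (natDegree_iterate_derivative _ _).trans (Nat.sub_le _ _)

lemma deg_A (q : ℂ[X]) (hq : q.coeff 0 = 0) (p : ℂ[X]) :
    ((aeval Dop q) p).natDegree ≤ p.natDegree - 1 := by
  have hqe : q.divX * X = q := by
    have := Polynomial.divX_mul_X_add q
    rwa [hq, map_zero, add_zero] at this
  rw [← hqe, map_mul, aeval_X, Module.End.mul_apply]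
  exact (deg_aeval _ _).trans (natDegree_derivative_le p)

lemma deg_A_pow (q : ℂ[X]) (hq : q.coeff 0 = 0) (m : ℕ) (p : ℂ[X]) :
    ((aeval Dop q ^ m) p).natDegree ≤ p.natDegree - m := by
  induction m generalizing p with
  | zero => simp
  | succ m ih =>
    rw [pow_succ, Module.End.mul_apply]
    have h1 := ih ((aeval Dop q) p)
    have h2 := deg_A q hq p
    omega

lemma vanish (q : ℂ[X]) (hq : q.coeff 0 = 0) (n : ℕ) :
    Dop ((aeval Dop q ^ n) (X ^ n)) = 0 := by
  have h : ((aeval Dop q ^ n) (X ^ n : ℂ[X])).natDegree ≤ 0 := by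
    have := deg_A_pow q hq n (X ^ n : ℂ[X])
    rwa [natDegree_X_pow, Nat.sub_self] at this
  have := Polynomial.eq_C_of_natDegree_le_zero h
  show Polynomial.derivative _ = 0
  rw [this, derivative_C]

lemma H_pow_apply (n : ℕ) : Mop (Dop ((X : ℂ[X]) ^ n)) = (n : ℂ) • X ^ n := by
  show (X : ℂ[X]) * Polynomial.derivative (X ^ n) = _
  rw [derivative_X_pow, smul_eq_C_mul]
  cases n with
  | zero => simp
  | succ n => simp [pow_succ]; ring

lemma fact_inv (m : ℕ) :
    (((m+1).factorial : ℂ))⁻¹ * ((m+1 : ℕ) : ℂ) = ((m.factorial : ℂ))⁻¹ := by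
  rw [Nat.factorial_succ]
  push_cast
  have h1 : ((m:ℂ) + 1) ≠ 0 := Nat.cast_add_one_ne_zero m
  have h2 : ((m.factorial : ℂ)) ≠ 0 := by
    exact_mod_cast Nat.cast_ne_zero.mpr (Nat.factorial_ne_zero m)
  field_simp

theorem stmt8 (q : ℂ[X]) (hq : q.coeff 0 = 0) (n : ℕ) :
    (Mop * Dop + aeval Dop (derivative q) * Dop) (expOp (aeval Dop q) (X ^ n))
      = (n : ℂ) • expOp (aeval Dop q) (X ^ n) := by
  set A : Module.End ℂ ℂ[X] := aeval Dop q with hA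
  set Q' : Module.End ℂ ℂ[X] := aeval Dop (derivative q) with hQ'
  -- key commutation, applied to X^n
  have hH : ∀ m : ℕ, Mop (Dop ((A ^ (m+1)) ((X:ℂ[X]) ^ n)))
      = (n : ℂ) • (A ^ (m+1)) ((X:ℂ[X]) ^ n)
        - ((m+1 : ℕ) : ℂ) • Q' (Dop ((A ^ m) ((X:ℂ[X]) ^ n))) := by
    intro m
    have h := LinearMap.congr_fun (comm_H_pow q m) ((X:ℂ[X]) ^ n)
    simp only [Module.End.mul_apply, LinearMap.add_apply, LinearMap.smul_apply, ← hA, ← hQ'] at h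
    rw [H_pow_apply, map_smul] at h
    rw [h]
    abel
  -- vanishing of the top term
  have hvan : Q' (Dop ((A ^ n) ((X:ℂ[X]) ^ n))) = 0 := by
    rw [hA, vanish q hq n, map_zero]
  -- the telescoping auxiliary sequence
  set F : ℕ → ℂ[X] := fun m => ((m.factorial : ℂ))⁻¹ • Q' (Dop ((A ^ m) ((X:ℂ[X]) ^ n))) with hF
  set G : ℕ → ℂ[X] := fun m => if m = 0 then 0 else F (m - 1) with hG
  -- per-term computation
  have hterm : ∀ m : ℕ,
      (Mop * Dop + Q' * Dop) (((m.factorial : ℂ))⁻¹ • (A ^ m) ((X:ℂ[X]) ^ n))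
        = (n : ℂ) • (((m.factorial : ℂ))⁻¹ • (A ^ m) ((X:ℂ[X]) ^ n)) + (F m - G m) := by
    intro m
    simp only [LinearMap.add_apply, Module.End.mul_apply, map_smul]
    cases m with
    | zero =>
      simp only [pow_zero, Module.End.one_apply, Nat.factorial_zero, Nat.cast_one, inv_one,
        one_smul, hG, hF, if_pos rfl, sub_zero]
      rw [H_pow_apply]
    | succ m =>
      rw [hH m]
      simp only [hF, hG, if_neg (Nat.succ_ne_zero m), Nat.add_sub_cancel]
      match_scalars
      · push_cast; ring
      · rw [Nat.factorial_succ]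
        have h1 : ((m:ℂ) + 1) ≠ 0 := Nat.cast_add_one_ne_zero m
        have h2 : ((m.factorial : ℂ)) ≠ 0 := by
          exact_mod_cast Nat.cast_ne_zero.mpr (Nat.factorial_ne_zero m)
        push_cast
        field_simp
      · push_cast; ring
  -- now sum up
  have hdeg : ((X:ℂ[X]) ^ n).natDegree = n := natDegree_X_pow n
  rw [expOp, hdeg, map_sum, Finset.smul_sum]
  rw [Finset.sum_congr rfl (fun m _ => hterm m)]
  rw [Finset.sum_add_distrib, Finset.sum_sub_distrib]
  have hGsum : ∑ m ∈ Finset.range (n+1), G m = ∑ m ∈ Finset.range n, F m := by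
    rw [Finset.sum_range_succ']
    simp [hG]
  have hFsum : ∑ m ∈ Finset.range (n+1), F m = (∑ m ∈ Finset.range n, F m) + F n := by
    rw [Finset.sum_range_succ]
  rw [hGsum, hFsum]
  have hFn : F n = 0 := by rw [hF]; simp [hvan]
  rw [hFn, add_zero, sub_self, add_zero]
end

section
/- Let β ∈ ℂ, B(p) = X*p'' + β•p' on ℂ[X], q ∈ ℂ[X] with zero constant term, and ad_{q(B)}(A) = q(B)∘A - A∘q(B). Then with M multiplication by X: ad_{q(B)}(M) = (2H + β•id)∘q'(B) + q''(B)∘B, ad²_{q(B)}(M) = 2•(q'(B))²∘B, and ad³_{q(B)}(M) = 0, where H = M∘D. -/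
open Polynomial

lemma hBm (β : ℂ) : Bop β * Mop = Mop * Bop β + (2 • Hop + β • (1 : Module.End ℂ ℂ[X])) := by
  apply LinearMap.ext; intro p
  simp only [Mop, Dop, Hop, Bop, Module.End.mul_apply, LinearMap.add_apply, LinearMap.smul_apply,
    LinearMap.mulLeft_apply, Module.End.one_apply, derivative_mul, derivative_X,
    smul_eq_C_mul, two_smul, derivative_add, derivative_C, derivative_one]
  ring

lemma hBmd (β : ℂ) : Bop β * Hop = Hop * Bop β + Bop β := by
  apply LinearMap.ext; intro p
  simp only [Mop, Dop, Hop, Bop, Module.End.mul_apply, LinearMap.add_apply, LinearMap.smul_apply,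
    LinearMap.mulLeft_apply, Module.End.one_apply, derivative_mul, derivative_X,
    smul_eq_C_mul, two_smul, derivative_add, derivative_C, derivative_one]
  ring

lemma hBc (β : ℂ) : Bop β * (2 • Hop + β • (1 : Module.End ℂ ℂ[X]))
    = (2 • Hop + β • (1 : Module.End ℂ ℂ[X])) * Bop β + 2 • Bop β := by
  apply LinearMap.ext; intro p
  simp only [Mop, Dop, Hop, Bop, Module.End.mul_apply, LinearMap.add_apply, LinearMap.smul_apply,
    LinearMap.mulLeft_apply, Module.End.one_apply, derivative_mul, derivative_X,
    smul_eq_C_mul, two_smul, derivative_add, derivative_C, derivative_one, derivative_zero, derivative_C_mul]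
  ring

noncomputable def Cop (β : ℂ) : Module.End ℂ ℂ[X] := 2 • Hop + β • (1 : Module.End ℂ ℂ[X])

lemma hBC (β : ℂ) : Bop β * Cop β = Cop β * Bop β + 2 • Bop β := hBc β

lemma hBmC (β : ℂ) : Bop β * Mop = Mop * Bop β + Cop β := hBm β

lemma hcomm (β : ℂ) (r s : ℂ[X]) :
    Commute (aeval (Bop β) r) (aeval (Bop β) s) := by
  show _ = _
  rw [← map_mul, ← map_mul, mul_comm]

lemma hcommB (β : ℂ) (r : ℂ[X]) : Commute (aeval (Bop β) r) (Bop β) := by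
  have := hcomm β r X; rwa [aeval_X] at this

lemma key2 (β : ℂ) (q : ℂ[X]) :
    aeval (Bop β) q * Cop β
      = Cop β * aeval (Bop β) q + 2 • (aeval (Bop β) (derivative q) * Bop β) := by
  have step : ∀ r : ℂ[X], (aeval (Bop β) r * Cop β = Cop β * aeval (Bop β) r
        + 2 • (aeval (Bop β) (derivative r) * Bop β)) →
      (aeval (Bop β) (r * X) * Cop β = Cop β * aeval (Bop β) (r * X)
        + 2 • (aeval (Bop β) (derivative (r * X)) * Bop β)) := by
    intro r IH
    rw [derivative_mul, derivative_X, mul_one, map_mul, map_add, map_mul, aeval_X]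
    rw [mul_assoc, hBC, mul_add, ← mul_assoc, IH]
    noncomm_ring
  induction q using Polynomial.induction_on with
  | C a =>
      simp only [aeval_C, derivative_C, map_zero, zero_mul, smul_zero, add_zero]
      exact Algebra.commutes a _
  | add p r hp hr =>
      rw [map_add, derivative_add, map_add, add_mul, mul_add, add_mul, smul_add, hp, hr]
      abel
  | monomial n a IH =>
      have := step (C a * X ^ n) IH
      rwa [mul_assoc, ← pow_succ] at this

lemma key (β : ℂ) (q : ℂ[X]) :
    aeval (Bop β) q * Mop = Mop * aeval (Bop β) q
      + (Cop β * aeval (Bop β) (derivative q)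
        + aeval (Bop β) (derivative (derivative q)) * Bop β) := by
  have step : ∀ r : ℂ[X], (aeval (Bop β) r * Mop = Mop * aeval (Bop β) r
        + (Cop β * aeval (Bop β) (derivative r)
          + aeval (Bop β) (derivative (derivative r)) * Bop β)) →
      (aeval (Bop β) (r * X) * Mop = Mop * aeval (Bop β) (r * X)
        + (Cop β * aeval (Bop β) (derivative (r * X))
          + aeval (Bop β) (derivative (derivative (r * X))) * Bop β)) := by
    intro r IH
    rw [derivative_mul, derivative_X, mul_one, derivative_add, derivative_mul, derivative_X,
      mul_one, map_mul, aeval_X, map_add, map_add, map_mul, map_add, map_mul, aeval_X]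
    rw [mul_assoc, hBmC, mul_add, ← mul_assoc, IH]
    rw [add_mul, add_mul, mul_assoc Mop, mul_assoc (Cop β), key2 β r]
    noncomm_ring
  induction q using Polynomial.induction_on with
  | C a =>
      simp only [aeval_C, derivative_C, map_zero, zero_mul, mul_zero, smul_zero, add_zero,
        zero_add]
      exact Algebra.commutes a _
  | add p r hp hr =>
      rw [map_add, derivative_add, derivative_add, map_add, map_add, add_mul, mul_add,
        mul_add, add_mul, hp, hr]
      abel
  | monomial n a IH =>
      have := step (C a * X ^ n) IH
      rwa [mul_assoc, ← pow_succ] at this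

lemma key3 (β : ℂ) (q : ℂ[X]) :
    aeval (Bop β) q * (Cop β * aeval (Bop β) (derivative q)
        + aeval (Bop β) (derivative (derivative q)) * Bop β)
      - (Cop β * aeval (Bop β) (derivative q)
        + aeval (Bop β) (derivative (derivative q)) * Bop β) * aeval (Bop β) q
      = (2 : ℂ) • ((aeval (Bop β) (derivative q)) ^ 2 * Bop β) := by
  set a := aeval (Bop β) q with ha
  set b := aeval (Bop β) (derivative q) with hb
  set c := aeval (Bop β) (derivative (derivative q)) with hc
  have h1 : a * Cop β = Cop β * a + 2 • (b * Bop β) := key2 β q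
  have hab : a * b = b * a := (hcomm β q (derivative q)).eq
  have hac : a * c = c * a := (hcomm β q (derivative (derivative q))).eq
  have haB : a * Bop β = Bop β * a := (hcommB β q).eq
  have hbB : b * Bop β = Bop β * b := (hcommB β (derivative q)).eq
  rw [mul_add, add_mul, ← mul_assoc a (Cop β) b, h1, add_mul, smul_mul_assoc,
    mul_assoc (Cop β) a b, hab, ← mul_assoc (Cop β) b a,
    ← mul_assoc a c (Bop β), hac, mul_assoc c a (Bop β), haB, ← mul_assoc c (Bop β) a,
    mul_assoc b (Bop β) b, ← hbB, ← mul_assoc b b (Bop β), ← sq]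
  rw [show ((2:ℂ) • (b ^ 2 * Bop β)) = 2 • (b ^ 2 * Bop β) by rw [two_smul, two_smul]]
  abel

theorem stmt12 (β : ℂ) (q : ℂ[X]) (hq : q.coeff 0 = 0)
    (ad : Module.End ℂ ℂ[X] → Module.End ℂ ℂ[X])
    (had : ∀ A, ad A = aeval (Bop β) q * A - A * aeval (Bop β) q) :
    ad Mop = (2 • Hop + β • (1 : Module.End ℂ ℂ[X])) * aeval (Bop β) (derivative q)
        + aeval (Bop β) (derivative (derivative q)) * Bop β ∧
    ad (ad Mop) = (2 : ℂ) • ((aeval (Bop β) (derivative q)) ^ 2 * Bop β) ∧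
    ad (ad (ad Mop)) = 0 := by
  have h1 : ad Mop = Cop β * aeval (Bop β) (derivative q)
      + aeval (Bop β) (derivative (derivative q)) * Bop β := by
    rw [had, key]; abel
  have h2 : ad (ad Mop) = (2 : ℂ) • ((aeval (Bop β) (derivative q)) ^ 2 * Bop β) := by
    rw [had, h1]; exact key3 β q
  refine ⟨h1, h2, ?_⟩
  rw [had, h2]
  exact sub_eq_zero_of_eq
    (((((hcomm β q (derivative q)).pow_right 2).mul_right (hcommB β q)).smul_right (2:ℂ)).eq)
end

section
/- Let β ∈ ℂ and P_n = e^{B²/2}(X^n) where B(p) = X*p'' + β•p'. Then P_n is an eigenfunction with eigenvalue n of the fourth-order operator L₁(p) = X²*p'''' + 2(1+β)X*p''' + (β+β²)*p'' + X*p'. -/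
open Polynomial

lemma Bop_apply (β : ℂ) (p : ℂ[X]) :
    Bop β p = X * derivative (derivative p) + β • derivative p := by
  simp [Bop, Mop, Dop, Module.End.mul_apply]

lemma Hop_apply (p : ℂ[X]) : Hop p = X * derivative p := by
  simp [Hop, Mop, Dop, Module.End.mul_apply]

lemma comm1_s15 (β : ℂ) : Hop * Bop β = Bop β * Hop - Bop β := by
  refine LinearMap.ext fun p => ?_
  simp only [Module.End.mul_apply, LinearMap.sub_apply, Bop_apply, Hop_apply,
    derivative_mul, derivative_X, derivative_one, derivative_C, derivative_smul,
    map_add, smul_add, smul_eq_C_mul]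
  ring

lemma Aop_eq (β : ℂ) :
    (aeval (Bop β) (C (1 / 2 : ℂ) * X ^ 2) : Module.End ℂ ℂ[X])
      = (1 / 2 : ℂ) • (Bop β ^ 2) := by
  simp [aeval_C, Algebra.smul_def]

lemma comm2 (β : ℂ) : Hop * (Bop β ^ 2) = Bop β ^ 2 * Hop - (2 : ℂ) • (Bop β ^ 2) := by
  have h := comm1_s15 β
  have e : Hop * Bop β ^ 2 = (Bop β * Hop - Bop β) * Bop β := by
    rw [pow_two, ← mul_assoc, h]
  rw [e, sub_mul, mul_assoc, h, mul_sub, pow_two, ← mul_assoc]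
  module

lemma comm3 (β : ℂ) (m : ℕ) :
    Hop * (Bop β ^ 2) ^ m = (Bop β ^ 2) ^ m * Hop - (2 * m : ℂ) • ((Bop β ^ 2) ^ m) := by
  induction m with
  | zero => simp
  | succ m ih =>
    have e : Hop * (Bop β ^ 2) ^ (m + 1) = (Hop * (Bop β ^ 2) ^ m) * Bop β ^ 2 := by
      rw [mul_assoc, pow_succ]
    rw [e, ih, sub_mul, mul_assoc, comm2 β, mul_sub, mul_smul_comm, smul_mul_assoc,
      ← mul_assoc, ← pow_succ, Nat.cast_add, Nat.cast_one]
    module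

lemma Bop_natDegree_le (β : ℂ) (p : ℂ[X]) : (Bop β p).natDegree ≤ p.natDegree - 1 := by
  rw [Bop_apply]
  have h1 : (derivative p).natDegree ≤ p.natDegree - 1 := natDegree_derivative_le p
  have h2 : (derivative (derivative p)).natDegree ≤ (derivative p).natDegree - 1 :=
    natDegree_derivative_le _
  refine (natDegree_add_le _ _).trans (max_le ?_ ?_)
  · rcases eq_or_ne (derivative (derivative p)) 0 with h | h
    · simp [h]
    · have hd1 : 1 ≤ (derivative p).natDegree := by
        by_contra hc
        push_neg at hc
        obtain ⟨c, hc'⟩ := natDegree_eq_zero.mp (Nat.lt_one_iff.mp hc)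
        apply h
        rw [← hc', derivative_C]
      refine natDegree_mul_le.trans ?_
      simp only [natDegree_X]
      omega
  · exact (natDegree_smul_le _ _).trans h1

lemma Bop_pow_zero (β : ℂ) (p : ℂ[X]) (k : ℕ) (h : p.natDegree ≤ k) :
    (Bop β ^ (k + 1)) p = 0 := by
  induction k generalizing p with
  | zero =>
    rw [pow_one, Bop_apply]
    obtain ⟨c, rfl⟩ := natDegree_eq_zero.mp (Nat.le_zero.mp h)
    simp
  | succ k ih =>
    rw [pow_succ, Module.End.mul_apply]
    refine ih _ ?_
    have := Bop_natDegree_le β p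
    omega

lemma HXpow (n : ℕ) : Hop ((X : ℂ[X]) ^ n) = (n : ℂ) • (X : ℂ[X]) ^ n := by
  cases n with
  | zero => simp [Hop_apply]
  | succ m =>
    rw [Hop_apply, derivative_X_pow, smul_eq_C_mul]
    push_cast
    ring

lemma Lapply (β : ℂ) (q : ℂ[X]) :
    (X : ℂ[X]) ^ 2 * derivative (derivative (derivative (derivative q)))
      + (2 * (1 + β)) • ((X : ℂ[X]) * derivative (derivative (derivative q)))
      + (β + β ^ 2) • derivative (derivative q)
      + (X : ℂ[X]) * derivative q
    = (Bop β ^ 2 + Hop) q := by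
  simp only [LinearMap.add_apply, pow_two, Module.End.mul_apply, Bop_apply, Hop_apply,
    derivative_add, derivative_mul, derivative_X, derivative_one, derivative_C,
    derivative_smul, derivative_zero, map_ofNat, map_add, smul_add, smul_eq_C_mul, C_add, C_mul, C_1]
  ring


theorem stmt15 (β : ℂ) (n : ℕ) :
    (X : ℂ[X]) ^ 2 * derivative (derivative (derivative (derivative
        (expOp (aeval (Bop β) (C (1 / 2 : ℂ) * X ^ 2)) (X ^ n)))))
      + (2 * (1 + β)) • ((X : ℂ[X]) * derivative (derivative (derivative
        (expOp (aeval (Bop β) (C (1 / 2 : ℂ) * X ^ 2)) (X ^ n)))))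
      + (β + β ^ 2) • derivative (derivative
        (expOp (aeval (Bop β) (C (1 / 2 : ℂ) * X ^ 2)) (X ^ n)))
      + (X : ℂ[X]) * derivative (expOp (aeval (Bop β) (C (1 / 2 : ℂ) * X ^ 2)) (X ^ n))
      = (n : ℂ) • expOp (aeval (Bop β) (C (1 / 2 : ℂ) * X ^ 2)) (X ^ n) := by
  rw [Lapply, Aop_eq]
  set A : Module.End ℂ ℂ[X] := (1 / 2 : ℂ) • Bop β ^ 2 with hAdef
  set q : ℕ → ℂ[X] := fun m => (A ^ m) ((X : ℂ[X]) ^ n) with hqdef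
  set c : ℕ → ℂ := fun m => ((Nat.factorial m : ℂ))⁻¹ with hcdef
  have hexp : expOp A ((X : ℂ[X]) ^ n) = ∑ m ∈ Finset.range (n + 1), c m • q m := by
    simp [expOp, natDegree_X_pow, hqdef, hcdef]
  rw [hexp]
  -- q (n+1) = 0
  have hq0 : q (n + 1) = 0 := by
    have h2 : (2 : ℕ) * (n + 1) = (n + (n + 1)) + 1 := by ring
    have hz : (Bop β ^ ((n + (n + 1)) + 1)) ((X : ℂ[X]) ^ n) = 0 :=
      Bop_pow_zero β _ _ (by rw [natDegree_X_pow]; omega)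
    show (A ^ (n + 1)) ((X : ℂ[X]) ^ n) = 0
    rw [hAdef, _root_.smul_pow, LinearMap.smul_apply, ← pow_mul, h2, hz, smul_zero]
  -- B² action
  have hB : ∀ m, (Bop β ^ 2) (q m) = (2 : ℂ) • q (m + 1) := by
    intro m
    have : q (m + 1) = A (q m) := by
      show (A ^ (m + 1)) _ = _
      rw [pow_succ', Module.End.mul_apply]
    rw [this, hAdef, LinearMap.smul_apply, smul_smul]
    norm_num
  -- H action
  have hH : ∀ m, Hop (q m) = ((n : ℂ) - 2 * m) • q m := by
    intro m
    have hcomm := DFunLike.congr_fun (comm3 β m) ((X : ℂ[X]) ^ n)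
    simp only [Module.End.mul_apply, LinearMap.sub_apply, LinearMap.smul_apply] at hcomm
    have : q m = ((1 / 2 : ℂ)) ^ m • ((Bop β ^ 2) ^ m) ((X : ℂ[X]) ^ n) := by
      show (A ^ m) _ = _
      rw [hAdef, _root_.smul_pow, LinearMap.smul_apply]
    rw [this, map_smul, hcomm, HXpow, map_smul]
    module
  -- per-term identity
  have hterm : ∀ m, (Bop β ^ 2 + Hop) (c m • q m)
      = (n : ℂ) • (c m • q m) + (2 * c m) • q (m + 1) - (2 * m * c m) • q m := by
    intro m
    rw [map_smul, LinearMap.add_apply, hB, hH]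
    module
  rw [map_sum, Finset.sum_congr rfl (fun m _ => hterm m), Finset.sum_sub_distrib,
    Finset.sum_add_distrib, ← Finset.smul_sum]
  have key : ∑ m ∈ Finset.range (n + 1), (2 * c m) • q (m + 1)
      = ∑ m ∈ Finset.range (n + 1), (2 * (m : ℂ) * c m) • q m := by
    rw [Finset.sum_range_succ, hq0, smul_zero, add_zero, Finset.sum_range_succ']
    have h0 : (2 * ((0 : ℕ) : ℂ) * c 0) • q 0 = 0 := by simp
    rw [h0, add_zero]
    refine Finset.sum_congr rfl fun i _ => ?_
    have hc : 2 * ((i + 1 : ℕ) : ℂ) * c (i + 1) = 2 * c i := by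
      rw [hcdef]
      simp only [Nat.factorial_succ, Nat.cast_mul, Nat.cast_add, Nat.cast_one]
      have h1 : ((i : ℂ) + 1) ≠ 0 := Nat.cast_add_one_ne_zero i
      have h2 : ((Nat.factorial i : ℂ)) ≠ 0 := Nat.cast_ne_zero.mpr (Nat.factorial_ne_zero i)
      field_simp
    rw [hc]
  rw [key]
  abel
end
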